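/- arXiv:2001.05015 — 2 statements merged into one kernel-verified Lean document; each statement's English description precedes it below -/
import Mathlib

section
/- For any λ ∈ (0,1], the following identity holds: ∑_{k≥1, k'≥0} (e^{-λ} λ^{k-1}/k!) · (e^{-(1-λ)} (1-λ)^{k'}/k'!) · k/(k+k') = 1 - 1/e. -/
/-!
Write `F(k, k') = λ^k (1-λ)^{k'} / (k! k'! (k + k' + 1))`; the summand is `e⁻¹ F(k, k')`.
Grouping by `n = k + k'`, the binomial theorem gives `∑_{k + k' = n} F(k, k') = 1 / (n + 1)!`,
and `∑ₙ 1 / (n + 1)! = e - 1`.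
-/

open Real Finset Nat

theorem HasSum.sum_antidiagonal {A α : Type*} [AddCommMonoid A] [HasAntidiagonal A]
    [AddCommMonoid α] [TopologicalSpace α] [ContinuousAdd α] [RegularSpace α]
    {f : A × A → α} {a : α} (h : HasSum f a) :
    HasSum (fun n ↦ ∑ kl ∈ antidiagonal n, f kl) a :=
  (HasAntidiagonal.sigmaAntidiagonalEquivProd.hasSum_iff.mpr h).sigma
    fun n ↦ (antidiagonal n).hasSum f

theorem sum_antidiagonal_pow_div_factorial_mul {𝕂 : Type*} [Field 𝕂] [CharZero 𝕂]
    (x y : 𝕂) (n : ℕ) :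
    ∑ kl ∈ antidiagonal n, x ^ kl.1 / kl.1 ! * (y ^ kl.2 / kl.2 !) = (x + y) ^ n / n ! := by
  rw [(Commute.all x y).add_pow', Finset.sum_div]
  refine Finset.sum_congr rfl fun kl hkl ↦ ?_
  obtain rfl := mem_antidiagonal.mp hkl
  have h := Nat.add_choose_mul_factorial_mul_factorial kl.1 kl.2
  have hchoose : ((kl.1 + kl.2).choose kl.2 : 𝕂) ≠ 0 := by
    exact_mod_cast (Nat.choose_pos le_add_self).ne'
  rw [Nat.choose_symm_add, nsmul_eq_mul, ← h]
  push_cast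
  field_simp

theorem hasSum_pow_succ_div_factorial_succ (x : ℝ) :
    HasSum (fun n ↦ x ^ (n + 1) / (n + 1)!) (exp x - 1) := by
  have := (hasSum_nat_add_iff' 1).mpr (NormedSpace.expSeries_div_hasSum_exp x)
  rw [← Real.exp_eq_exp_ℝ] at this
  simpa using this

theorem summable_pow_div_factorial_mul_pow_div_factorial_div (x y : ℝ) :
    Summable fun p : ℕ × ℕ ↦ x ^ p.1 / p.1 ! * (y ^ p.2 / p.2 !) / (p.1 + p.2 + 1) := by
  refine .of_norm_bounded ((NormedSpace.norm_expSeries_div_summable x).mul_norm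
    (NormedSpace.norm_expSeries_div_summable y)) fun p ↦ ?_
  rw [norm_div]
  exact div_le_self (norm_nonneg _) (by rw [Real.norm_of_nonneg (by positivity)]; linarith)

theorem hasSum_pow_div_factorial_mul_pow_div_factorial_div {x y : ℝ} (hxy : x + y ≠ 0) :
    HasSum (fun p : ℕ × ℕ ↦ x ^ p.1 / p.1 ! * (y ^ p.2 / p.2 !) / (p.1 + p.2 + 1))
      ((exp (x + y) - 1) / (x + y)) := by
  have hF := (summable_pow_div_factorial_mul_pow_div_factorial_div x y).hasSum
  have hdiag : ∀ n : ℕ,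
      ∑ kl ∈ antidiagonal n, x ^ kl.1 / kl.1 ! * (y ^ kl.2 / kl.2 !) / (kl.1 + kl.2 + 1) =
        (x + y) ^ (n + 1) / (n + 1)! / (x + y) := by
    intro n
    rw [Finset.sum_congr rfl fun kl hkl ↦ by rw [← Nat.cast_add, mem_antidiagonal.mp hkl],
      ← Finset.sum_div, sum_antidiagonal_pow_div_factorial_mul, Nat.factorial_succ]
    push_cast
    field_simp
    ring
  have h := hF.sum_antidiagonal
  simp only [hdiag] at h
  rwa [h.unique ((hasSum_pow_succ_div_factorial_succ (x + y)).div_const _)] at hF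

theorem stmt_2_general (lam : ℝ) :
    (∑' k : ℕ, ∑' k' : ℕ,
        (Real.exp (-lam) * lam ^ ((k + 1) - 1) / (Nat.factorial (k + 1))) *
        (Real.exp (-(1 - lam)) * (1 - lam) ^ k' / (Nat.factorial k')) *
        ((k + 1 : ℝ) / ((k + 1 : ℝ) + (k' : ℝ))))
      = 1 - 1 / Real.exp 1 := by
  have hF := (hasSum_pow_div_factorial_mul_pow_div_factorial_div
    (x := lam) (y := 1 - lam) (by simp)).mul_left (exp (-1))
  have hexp : exp (-lam) * exp (-(1 - lam)) = exp (-1) := by rw [← exp_add]; ring_nf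
  calc _ = ∑' k : ℕ, ∑' k' : ℕ, exp (-1) *
        (lam ^ k / k ! * ((1 - lam) ^ k' / k' !) / (k + k' + 1)) := by
        refine tsum_congr fun k ↦ tsum_congr fun k' ↦ ?_
        rw [Nat.add_sub_cancel, Nat.factorial_succ, ← hexp]
        push_cast
        field_simp
        ring
    _ = exp (-1) * ((exp (lam + (1 - lam)) - 1) / (lam + (1 - lam))) :=
        hF.summable.tsum_prod.symm.trans hF.tsum_eq
    _ = 1 - 1 / exp 1 := by
        rw [add_sub_cancel, div_one, exp_neg]
        field_simp

theorem stmt_2 (lam : ℝ) (hlam : 0 < lam) (hlam1 : lam ≤ 1) :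
    (∑' k : ℕ, ∑' k' : ℕ,
        (Real.exp (-lam) * lam ^ ((k + 1) - 1) / (Nat.factorial (k + 1))) *
        (Real.exp (-(1 - lam)) * (1 - lam) ^ k' / (Nat.factorial k')) *
        ((k + 1 : ℝ) / ((k + 1 : ℝ) + (k' : ℝ))))
      = 1 - 1 / Real.exp 1 :=
  stmt_2_general lam
end

section
/- Fix integers m̃*, ñ* ≥ 1 and define f(m) = m̃*/(m + m̃*) and g(n) = ñ*/(n + ñ*) for m, n ∈ ℕ. Define d(m,n) = f(m)g(n) if m,n > 0; d(m,0) = f(m)(2-b) for m > 0; d(0,n) = g(n)(2-a) for n > 0; d(0,0) = (2-a)(2-b), where a, b ∈ (0,1). Then for all m, n ≥ 0 and all integers u, v ≥ 1: d(m,n) - d(m+u, n) - d(m, n+v) + d(m+u, n+v) ≥ 0. -/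
theorem stmt_7 (ms ns : ℕ) (hms : 1 ≤ ms) (hns : 1 ≤ ns)
    (a b : ℝ) (ha : a ∈ Set.Ioo (0 : ℝ) 1) (hb : b ∈ Set.Ioo (0 : ℝ) 1)
    (f g : ℕ → ℝ)
    (hf : ∀ m : ℕ, f m = (ms : ℝ) / ((m : ℝ) + ms))
    (hg : ∀ n : ℕ, g n = (ns : ℝ) / ((n : ℝ) + ns))
    (d : ℕ → ℕ → ℝ)
    (hd00 : d 0 0 = (2 - a) * (2 - b))
    (hdm0 : ∀ m : ℕ, 0 < m → d m 0 = f m * (2 - b))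
    (hd0n : ∀ n : ℕ, 0 < n → d 0 n = g n * (2 - a))
    (hdmn : ∀ m n : ℕ, 0 < m → 0 < n → d m n = f m * g n) :
    ∀ m n u v : ℕ, 1 ≤ u → 1 ≤ v →
      0 ≤ d m n - d (m + u) n - d m (n + v) + d (m + u) (n + v) := by
  have hms' : (0:ℝ) < ms := by exact_mod_cast hms
  have hns' : (0:ℝ) < ns := by exact_mod_cast hns
  have hfle1 : ∀ m : ℕ, f m ≤ 1 := by
    intro m; rw [hf]
    rw [div_le_one (by positivity)]
    have : (0:ℝ) ≤ (m:ℝ) := Nat.cast_nonneg m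
    linarith
  have hgle1 : ∀ n : ℕ, g n ≤ 1 := by
    intro n; rw [hg]
    rw [div_le_one (by positivity)]
    have : (0:ℝ) ≤ (n:ℝ) := Nat.cast_nonneg n
    linarith
  have hfmono : ∀ m u : ℕ, f (m + u) ≤ f m := by
    intro m u; rw [hf, hf]
    apply div_le_div_of_nonneg_left (le_of_lt hms') (by positivity)
    push_cast
    have : (0:ℝ) ≤ (u:ℝ) := Nat.cast_nonneg u
    linarith
  have hgmono : ∀ n v : ℕ, g (n + v) ≤ g n := by
    intro n v; rw [hg, hg]
    apply div_le_div_of_nonneg_left (le_of_lt hns') (by positivity)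
    push_cast
    have : (0:ℝ) ≤ (v:ℝ) := Nat.cast_nonneg v
    linarith
  have ha2 : (1:ℝ) ≤ 2 - a := by have := ha.2; linarith
  have hb2 : (1:ℝ) ≤ 2 - b := by have := hb.2; linarith
  intro m n u v hu hv
  have hupos : 0 < m + u := by omega
  have hvpos : 0 < n + v := by omega
  rcases Nat.eq_zero_or_pos m with hm | hm <;> rcases Nat.eq_zero_or_pos n with hn | hn
  · subst hm; subst hn
    rw [hd00, hdm0 _ hupos, hd0n _ hvpos, hdmn _ _ hupos hvpos]
    have h1 : f (0 + u) ≤ 2 - a := le_trans (hfle1 _) ha2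
    have h2 : g (0 + v) ≤ 2 - b := le_trans (hgle1 _) hb2
    nlinarith [hfle1 (0+u), hgle1 (0+v)]
  · subst hm
    rw [hd0n _ hn, hdmn _ _ hupos hn, hd0n _ hvpos, hdmn _ _ hupos hvpos]
    have h1 : f (0 + u) ≤ 2 - a := le_trans (hfle1 _) ha2
    have h2 : g (n + v) ≤ g n := hgmono n v
    nlinarith
  · subst hn
    rw [hdm0 _ hm, hdm0 _ hupos, hdmn _ _ hm hvpos, hdmn _ _ hupos hvpos]
    have h1 : g (0 + v) ≤ 2 - b := le_trans (hgle1 _) hb2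
    have h2 : f (m + u) ≤ f m := hfmono m u
    nlinarith
  · rw [hdmn _ _ hm hn, hdmn _ _ hupos hn, hdmn _ _ hm hvpos, hdmn _ _ hupos hvpos]
    nlinarith [hfmono m u, hgmono n v]
end
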